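/- arXiv:1808.02419 — 3 statements merged into one kernel-verified Lean document; each statement's English description precedes it below -/
import Mathlib

section
/- There exists a universal constant C > 0 such that for every δ ∈ (0, 1/2] and all f, g ∈ L²(0,∞): ∫₀^∞ ∫₀^∞ |f(x)| |g(y)| / √((x − y)² + δ² x²) dx dy ≤ C · ln(1/δ) · ‖f‖_{L²(0,∞)} · ‖g‖_{L²(0,∞)}. -/
set_option maxHeartbeats 1000000

open MeasureTheory Set
open scoped ENNReal

lemma lint_le_ofReal_integral {s : Set ℝ} (hs : MeasurableSet s) {f g : ℝ → ℝ}
    (hg : IntegrableOn g s) (hg0 : 0 ≤ᵐ[volume.restrict s] g)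
    (hfg : ∀ t ∈ s, f t ≤ g t) :
    ∫⁻ t in s, ENNReal.ofReal (f t) ≤ ENNReal.ofReal (∫ t in s, g t) := by
  rw [MeasureTheory.ofReal_integral_eq_lintegral_ofReal hg hg0]
  refine setLIntegral_mono_ae' hs ?_
  filter_upwards with t ht
  exact ENNReal.ofReal_le_ofReal (hfg t ht)

lemma core_est {η : ℝ} (h0 : 0 < η) (h1 : η ≤ 1/2) :
    ∫⁻ t in Set.Ioi (0:ℝ),
        ENNReal.ofReal (t ^ (-(1/2) : ℝ) / Real.sqrt ((1 - t)^2 + η^2))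
      ≤ ENNReal.ofReal (30 * Real.log (1/η)) := by
  set L := Real.log (1/η) with hLdef
  have h2η : (2:ℝ) ≤ 1/η := by rw [le_div_iff₀ h0]; linarith
  have hL2 : Real.log 2 ≤ L := Real.log_le_log (by norm_num) h2η
  have hlog2 : (0.6931471803 : ℝ) < Real.log 2 := Real.log_two_gt_d9
  have hL0 : 0 < L := lt_of_lt_of_le (by linarith) hL2
  set K : ℝ → ℝ := fun t => t ^ (-(1/2) : ℝ) / Real.sqrt ((1 - t)^2 + η^2) with hK
  have sqrt_lb : ∀ (c t : ℝ), 0 ≤ c → c^2 ≤ (1 - t)^2 + η^2 →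
      c ≤ Real.sqrt ((1 - t)^2 + η^2) := by
    intro c t hc hle
    calc c = Real.sqrt (c^2) := (Real.sqrt_sq hc).symm
    _ ≤ _ := Real.sqrt_le_sqrt hle
  have sqrt_pos : ∀ t : ℝ, 0 < Real.sqrt ((1 - t)^2 + η^2) := by
    intro t; apply Real.sqrt_pos.2; positivity
  -- numerator bound on [1/2, ∞)
  have num_le : ∀ t : ℝ, 1/2 ≤ t → t ^ (-(1/2) : ℝ) ≤ 2 := by
    intro t ht
    have h1' : t ^ (-(1/2) : ℝ) ≤ (1/2 : ℝ) ^ (-(1/2) : ℝ) :=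
      Real.rpow_le_rpow_of_nonpos (by norm_num) ht (by norm_num)
    have h2' : ((1:ℝ)/2) ^ (-(1/2) : ℝ) ≤ (1/2 : ℝ) ^ (-1 : ℝ) :=
      Real.rpow_le_rpow_of_exponent_ge (by norm_num) (by norm_num) (by norm_num)
    have h3' : ((1:ℝ)/2) ^ (-1 : ℝ) = 2 := by
      rw [Real.rpow_neg_one]; norm_num
    linarith
  -- Piece 1 : (0, 1/2]
  have P1 : ∫⁻ t in Set.Ioc (0:ℝ) (1/2), ENNReal.ofReal (K t) ≤ ENNReal.ofReal 4 := by
    have hint : IntegrableOn (fun t : ℝ => 2 * t ^ (-(1/2) : ℝ)) (Set.Ioc 0 (1/2)) := by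
      have := (intervalIntegral.intervalIntegrable_rpow' (a := 0) (b := 1/2)
        (by norm_num : (-1:ℝ) < -(1/2))).const_mul 2
      rwa [intervalIntegrable_iff_integrableOn_Ioc_of_le (by norm_num)] at this
    have hval : ∫ t in Set.Ioc (0:ℝ) (1/2), 2 * t ^ (-(1/2) : ℝ) ≤ 4 := by
      rw [← intervalIntegral.integral_of_le (by norm_num : (0:ℝ) ≤ 1/2),
        intervalIntegral.integral_const_mul,
        integral_rpow (Or.inl (by norm_num : (-1:ℝ) < -(1/2)))]
      have h0' : (0:ℝ) ^ (-(1/2) + 1 : ℝ) = 0 := Real.zero_rpow (by norm_num)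
      rw [h0']
      have : ((1:ℝ)/2) ^ (-(1/2) + 1 : ℝ) ≤ 1 :=
        Real.rpow_le_one (by norm_num) (by norm_num) (by norm_num)
      have h2 : (0:ℝ) ≤ ((1:ℝ)/2) ^ (-(1/2) + 1 : ℝ) := Real.rpow_nonneg (by norm_num) _
      norm_num
      linarith
    calc ∫⁻ t in Set.Ioc (0:ℝ) (1/2), ENNReal.ofReal (K t)
        ≤ ENNReal.ofReal (∫ t in Set.Ioc (0:ℝ) (1/2), 2 * t ^ (-(1/2) : ℝ)) := by
          refine lint_le_ofReal_integral measurableSet_Ioc hint ?_ ?_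
          · filter_upwards [ae_restrict_mem measurableSet_Ioc] with t ht
            have : (0:ℝ) ≤ t ^ (-(1/2) : ℝ) := Real.rpow_nonneg ht.1.le _
            positivity
          · intro t ht
            have hden : (1:ℝ)/2 ≤ Real.sqrt ((1 - t)^2 + η^2) := by
              apply sqrt_lb _ _ (by norm_num)
              nlinarith [ht.2, sq_nonneg η]
            calc K t ≤ t ^ (-(1/2) : ℝ) / (1/2) := by
                  apply div_le_div_of_nonneg_left (Real.rpow_nonneg ht.1.le _)
                    (by norm_num) hden
              _ = 2 * t ^ (-(1/2) : ℝ) := by ring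
      _ ≤ ENNReal.ofReal 4 := ENNReal.ofReal_le_ofReal hval
  -- Piece 3 : (2, ∞)
  have P3 : ∫⁻ t in Set.Ioi (2:ℝ), ENNReal.ofReal (K t) ≤ ENNReal.ofReal 4 := by
    have hint : IntegrableOn (fun t : ℝ => 2 * t ^ (-(3/2) : ℝ)) (Set.Ioi 2) :=
      (integrableOn_Ioi_rpow_of_lt (by norm_num) (by norm_num)).const_mul 2
    have hval : ∫ t in Set.Ioi (2:ℝ), 2 * t ^ (-(3/2) : ℝ) ≤ 4 := by
      rw [integral_const_mul,
        integral_Ioi_rpow_of_lt (by norm_num : (-(3/2):ℝ) < -1) (by norm_num : (0:ℝ) < 2)]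
      have h1' : (2:ℝ) ^ (-(3/2) + 1 : ℝ) ≤ 1 :=
        Real.rpow_le_one_of_one_le_of_nonpos (by norm_num) (by norm_num)
      have h2' : (0:ℝ) ≤ (2:ℝ) ^ (-(3/2) + 1 : ℝ) := Real.rpow_nonneg (by norm_num) _
      norm_num
      linarith
    calc ∫⁻ t in Set.Ioi (2:ℝ), ENNReal.ofReal (K t)
        ≤ ENNReal.ofReal (∫ t in Set.Ioi (2:ℝ), 2 * t ^ (-(3/2) : ℝ)) := by
          refine lint_le_ofReal_integral measurableSet_Ioi hint ?_ ?_
          · filter_upwards [ae_restrict_mem measurableSet_Ioi] with t ht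
            have h2 : (0:ℝ) < t := lt_trans (by norm_num) ht
            have : (0:ℝ) ≤ t ^ (-(3/2) : ℝ) := Real.rpow_nonneg h2.le _
            positivity
          · intro t ht
            have ht2 : (2:ℝ) < t := ht
            have ht0 : (0:ℝ) < t := by linarith
            have hden : t/2 ≤ Real.sqrt ((1 - t)^2 + η^2) := by
              apply sqrt_lb _ _ (by linarith)
              nlinarith [sq_nonneg η]
            have hexp : t ^ (-(3/2) : ℝ) = t ^ (-(1/2) : ℝ) * t⁻¹ := by
              rw [← Real.rpow_neg_one t, ← Real.rpow_add ht0]; norm_num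
            calc K t ≤ t ^ (-(1/2) : ℝ) / (t/2) := by
                  apply div_le_div_of_nonneg_left (Real.rpow_nonneg ht0.le _)
                    (by linarith) hden
              _ = 2 * (t ^ (-(1/2) : ℝ) * t⁻¹) := by
                  field_simp
              _ = 2 * t ^ (-(3/2) : ℝ) := by rw [hexp]
      _ ≤ ENNReal.ofReal 4 := ENNReal.ofReal_le_ofReal hval
  -- Piece 2a : (1/2, 1-η]
  have P2a : ∫⁻ t in Set.Ioc (1/2:ℝ) (1-η), ENNReal.ofReal (K t)
      ≤ ENNReal.ofReal (2*L) := by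
    have hcont : ContinuousOn (fun t : ℝ => 2 * (1 - t)⁻¹) (Set.uIcc (1/2) (1-η)) := by
      rw [Set.uIcc_of_le (by linarith)]
      refine continuousOn_const.mul (((continuous_const.sub continuous_id).continuousOn).inv₀ ?_)
      intro t ht
      have := ht.2
      simp only [Set.mem_Icc] at ht
      have : t ≤ 1 - η := ht.2
      intro hc
      simp only [Pi.sub_apply, id_eq] at hc
      nlinarith
    have hint : IntegrableOn (fun t : ℝ => 2 * (1 - t)⁻¹) (Set.Ioc (1/2) (1-η)) := by
      have h' : IntervalIntegrable (fun t : ℝ => 2 * (1 - t)⁻¹) volume (1/2) (1-η) :=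
        hcont.intervalIntegrable
      rwa [intervalIntegrable_iff_integrableOn_Ioc_of_le (by linarith)] at h'
    have hval : ∫ t in Set.Ioc (1/2:ℝ) (1-η), 2 * (1 - t)⁻¹ ≤ 2*L := by
      rw [← intervalIntegral.integral_of_le (by linarith : (1:ℝ)/2 ≤ 1-η),
        intervalIntegral.integral_const_mul]
      have hcs := intervalIntegral.integral_comp_sub_left (a := (1/2:ℝ)) (b := 1-η)
        (fun u : ℝ => u⁻¹) 1
      rw [hcs]
      have ha : (1:ℝ) - (1-η) = η := by ring
      have hb : (1:ℝ) - 1/2 = 1/2 := by ring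
      rw [ha, hb]
      have h3 : ∫ u in η..(1/2:ℝ), u⁻¹ = Real.log ((1/2)/η) := by
        rw [← integral_one_div]
        · simp only [one_div]
        · rw [Set.uIcc_of_le (by linarith : η ≤ (1:ℝ)/2)]
          intro hc
          exact absurd hc.1 (by linarith)
      rw [h3]
      have h4 : Real.log ((1/2)/η) ≤ L := by
        apply Real.log_le_log (by positivity)
        rw [div_le_div_iff₀ h0 h0] <;> nlinarith
      linarith
    calc ∫⁻ t in Set.Ioc (1/2:ℝ) (1-η), ENNReal.ofReal (K t)
        ≤ ENNReal.ofReal (∫ t in Set.Ioc (1/2:ℝ) (1-η), 2 * (1 - t)⁻¹) := by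
          refine lint_le_ofReal_integral measurableSet_Ioc hint ?_ ?_
          · filter_upwards [ae_restrict_mem measurableSet_Ioc] with t ht
            have : (0:ℝ) < 1 - t := by nlinarith [ht.2]
            positivity
          · intro t ht
            have h1t : (0:ℝ) < 1 - t := by nlinarith [ht.2]
            have hden : 1 - t ≤ Real.sqrt ((1 - t)^2 + η^2) := by
              apply sqrt_lb _ _ h1t.le; nlinarith [sq_nonneg η]
            calc K t ≤ 2 / (1 - t) :=
                  div_le_div₀ (by norm_num) (num_le t ht.1.le) h1t hden
              _ = 2 * (1 - t)⁻¹ := by rw [div_eq_mul_inv]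
      _ ≤ ENNReal.ofReal (2*L) := ENNReal.ofReal_le_ofReal hval
  -- Piece 2b : (1-η, 1+η]
  have P2b : ∫⁻ t in Set.Ioc (1-η) (1+η), ENNReal.ofReal (K t)
      ≤ ENNReal.ofReal 4 := by
    have hpt : ∀ t ∈ Set.Ioc (1-η) (1+η), K t ≤ 2/η := by
      intro t ht
      have hden : η ≤ Real.sqrt ((1 - t)^2 + η^2) := by
        apply sqrt_lb _ _ h0.le; nlinarith [sq_nonneg (1-t)]
      exact div_le_div₀ (by norm_num) (num_le t (by linarith [ht.1])) h0 hden
    calc ∫⁻ t in Set.Ioc (1-η) (1+η), ENNReal.ofReal (K t)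
        ≤ ∫⁻ _ in Set.Ioc (1-η) (1+η), ENNReal.ofReal (2/η) := by
          refine setLIntegral_mono' measurableSet_Ioc ?_
          intro t ht; exact ENNReal.ofReal_le_ofReal (hpt t ht)
      _ = ENNReal.ofReal (2/η) * volume (Set.Ioc (1-η) (1+η)) := setLIntegral_const _ _
      _ ≤ ENNReal.ofReal 4 := by
          rw [Real.volume_Ioc, ← ENNReal.ofReal_mul (by positivity : (0:ℝ) ≤ 2/η)]
          apply ENNReal.ofReal_le_ofReal
          have hc : 2/η * (1+η-(1-η)) = 4 := by field_simp; ring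
          rw [hc]
  -- Piece 2c : (1+η, 2]
  have P2c : ∫⁻ t in Set.Ioc (1+η) 2, ENNReal.ofReal (K t)
      ≤ ENNReal.ofReal (2*L) := by
    have hcont : ContinuousOn (fun t : ℝ => 2 * (t - 1)⁻¹) (Set.uIcc (1+η) 2) := by
      rw [Set.uIcc_of_le (by linarith)]
      refine continuousOn_const.mul (((continuous_id.sub continuous_const).continuousOn).inv₀ ?_)
      intro t ht
      simp only [Set.mem_Icc] at ht
      intro hc
      simp only [Pi.sub_apply, id_eq] at hc
      nlinarith [ht.1]
    have hint : IntegrableOn (fun t : ℝ => 2 * (t - 1)⁻¹) (Set.Ioc (1+η) 2) := by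
      have h' : IntervalIntegrable (fun t : ℝ => 2 * (t - 1)⁻¹) volume (1+η) 2 :=
        hcont.intervalIntegrable
      rwa [intervalIntegrable_iff_integrableOn_Ioc_of_le (by linarith)] at h'
    have hval : ∫ t in Set.Ioc (1+η:ℝ) 2, 2 * (t - 1)⁻¹ ≤ 2*L := by
      rw [← intervalIntegral.integral_of_le (by linarith : (1:ℝ)+η ≤ 2),
        intervalIntegral.integral_const_mul]
      have hcs := intervalIntegral.integral_comp_sub_right (a := (1+η:ℝ)) (b := 2)
        (fun u : ℝ => u⁻¹) 1
      rw [hcs]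
      have ha : (1:ℝ) + η - 1 = η := by ring
      have hb : (2:ℝ) - 1 = 1 := by ring
      rw [ha, hb]
      have h3 : ∫ u in η..(1:ℝ), u⁻¹ = Real.log (1/η) := by
        rw [← integral_one_div]
        · simp only [one_div]
        · rw [Set.uIcc_of_le (by linarith : η ≤ (1:ℝ))]
          intro hc
          exact absurd hc.1 (by linarith)
      rw [h3, ← hLdef]
    calc ∫⁻ t in Set.Ioc (1+η:ℝ) 2, ENNReal.ofReal (K t)
        ≤ ENNReal.ofReal (∫ t in Set.Ioc (1+η:ℝ) 2, 2 * (t - 1)⁻¹) := by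
          refine lint_le_ofReal_integral measurableSet_Ioc hint ?_ ?_
          · filter_upwards [ae_restrict_mem measurableSet_Ioc] with t ht
            have : (0:ℝ) < t - 1 := by nlinarith [ht.1]
            positivity
          · intro t ht
            have h1t : (0:ℝ) < t - 1 := by nlinarith [ht.1]
            have hden : t - 1 ≤ Real.sqrt ((1 - t)^2 + η^2) := by
              apply sqrt_lb _ _ h1t.le; nlinarith [sq_nonneg η]
            calc K t ≤ 2 / (t - 1) :=
                  div_le_div₀ (by norm_num) (num_le t (by linarith [ht.1])) h1t hden
              _ = 2 * (t - 1)⁻¹ := by rw [div_eq_mul_inv]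
      _ ≤ ENNReal.ofReal (2*L) := ENNReal.ofReal_le_ofReal hval
  -- assemble
  have hsplit : (Set.Ioi (0:ℝ)) = (Set.Ioc 0 (1/2) ∪ Set.Ioc (1/2) 2) ∪ Set.Ioi 2 := by
    rw [Set.Ioc_union_Ioc_eq_Ioc (by norm_num) (by norm_num),
      Set.Ioc_union_Ioi_eq_Ioi (by norm_num)]
  have hsplit2 : (Set.Ioc (1/2:ℝ) 2)
      = (Set.Ioc (1/2) (1-η) ∪ Set.Ioc (1-η) (1+η)) ∪ Set.Ioc (1+η) 2 := by
    rw [Set.Ioc_union_Ioc_eq_Ioc (by linarith) (by linarith),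
      Set.Ioc_union_Ioc_eq_Ioc (by linarith) (by linarith)]
  calc ∫⁻ t in Set.Ioi (0:ℝ), ENNReal.ofReal (K t)
      ≤ ((∫⁻ t in Set.Ioc (0:ℝ) (1/2), ENNReal.ofReal (K t))
          + (∫⁻ t in Set.Ioc (1/2:ℝ) 2, ENNReal.ofReal (K t)))
          + (∫⁻ t in Set.Ioi (2:ℝ), ENNReal.ofReal (K t)) := by
        rw [hsplit]
        exact le_trans (lintegral_union_le _ _ _)
          (add_le_add_left (lintegral_union_le _ _ _) _)
    _ ≤ (ENNReal.ofReal 4 + ((ENNReal.ofReal (2*L) + ENNReal.ofReal 4)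
          + ENNReal.ofReal (2*L))) + ENNReal.ofReal 4 := by
        refine add_le_add (add_le_add P1 ?_) P3
        rw [hsplit2]
        exact le_trans (lintegral_union_le _ _ _)
          (add_le_add (le_trans (lintegral_union_le _ _ _) (add_le_add P2a P2b)) P2c)
    _ ≤ ENNReal.ofReal (30 * L) := by
        rw [← ENNReal.ofReal_add (by positivity) (by norm_num),
          ← ENNReal.ofReal_add (by positivity) (by positivity),
          ← ENNReal.ofReal_add (by norm_num) (by positivity),
          ← ENNReal.ofReal_add (by positivity) (by norm_num)]
        apply ENNReal.ofReal_le_ofReal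
        nlinarith

lemma lintegral_Ioi_scale {c : ℝ} (hc : 0 < c) {F : ℝ → ℝ≥0∞} (hF : Measurable F) :
    ∫⁻ y in Set.Ioi (0:ℝ), F y
      = ENNReal.ofReal c * ∫⁻ t in Set.Ioi (0:ℝ), F (c * t) := by
  have hpre : (fun t : ℝ => c * t) ⁻¹' (Set.Ioi (0:ℝ)) = Set.Ioi 0 := by
    ext t
    simp only [Set.mem_preimage, Set.mem_Ioi]
    constructor
    · intro h
      nlinarith
    · intro h
      positivity
  have hmap : Measure.map (fun t : ℝ => c * t) (volume.restrict (Set.Ioi (0:ℝ)))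
      = (ENNReal.ofReal |c⁻¹|) • (volume.restrict (Set.Ioi (0:ℝ))) := by
    conv_lhs => rw [← hpre]
    rw [← Measure.restrict_map (measurable_const_mul c) measurableSet_Ioi,
      Real.map_volume_mul_left (ne_of_gt hc), Measure.restrict_smul]
  have h1 : ∫⁻ t in Set.Ioi (0:ℝ), F (c * t)
      = ENNReal.ofReal |c⁻¹| * ∫⁻ y in Set.Ioi (0:ℝ), F y := by
    rw [← lintegral_map hF (measurable_const_mul c), hmap, lintegral_smul_measure, smul_eq_mul]
  rw [h1, ← mul_assoc, ← ENNReal.ofReal_mul hc.le, abs_of_pos (inv_pos.2 hc),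
    mul_inv_cancel₀ (ne_of_gt hc), ENNReal.ofReal_one, one_mul]

lemma kernel_meas {δ x : ℝ} : Measurable (fun y : ℝ =>
    ENNReal.ofReal (y ^ (-(1/2):ℝ) / Real.sqrt ((x - y)^2 + δ^2 * x^2))) := by
  apply Measurable.ennreal_ofReal
  apply Measurable.div
  · exact measurable_id.pow_const _
  · exact (Real.continuous_sqrt.measurable).comp
      (((continuous_const.sub continuous_id).pow 2).add continuous_const).measurable

lemma kernel_meas' {δ y : ℝ} : Measurable (fun x : ℝ =>
    ENNReal.ofReal (x ^ (-(1/2):ℝ) / Real.sqrt ((x - y)^2 + δ^2 * x^2))) := by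
  apply Measurable.ennreal_ofReal
  apply Measurable.div
  · exact measurable_id.pow_const _
  · refine (Real.continuous_sqrt.measurable).comp ?_
    exact (((continuous_id.sub continuous_const).pow 2).add
      ((continuous_const.mul (continuous_pow 2)))).measurable

lemma schur1 {δ x : ℝ} (hδ0 : 0 < δ) (hδ1 : δ ≤ 1/2) (hx : 0 < x) :
    ∫⁻ y in Set.Ioi (0:ℝ),
        ENNReal.ofReal (y ^ (-(1/2):ℝ) / Real.sqrt ((x - y)^2 + δ^2 * x^2))
      ≤ ENNReal.ofReal (120 * Real.log (1/δ)) * ENNReal.ofReal (x ^ (-(1/2):ℝ)) := by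
  have hL0 : 0 < Real.log (1/δ) := Real.log_pos (by rw [lt_div_iff₀ hδ0]; linarith)
  rw [lintegral_Ioi_scale hx kernel_meas]
  have hcong : ∫⁻ t in Set.Ioi (0:ℝ),
      ENNReal.ofReal ((x*t) ^ (-(1/2):ℝ) / Real.sqrt ((x - x*t)^2 + δ^2 * x^2))
      = ∫⁻ t in Set.Ioi (0:ℝ), ENNReal.ofReal (x ^ (-(3/2):ℝ))
          * ENNReal.ofReal (t ^ (-(1/2):ℝ) / Real.sqrt ((1 - t)^2 + δ^2)) := by
    refine lintegral_congr_ae ?_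
    filter_upwards [ae_restrict_mem measurableSet_Ioi] with t ht
    have ht0 : (0:ℝ) < t := ht
    have hnum : (x*t) ^ (-(1/2):ℝ) = x ^ (-(1/2):ℝ) * t ^ (-(1/2):ℝ) :=
      Real.mul_rpow hx.le ht0.le
    have hden : (x - x*t)^2 + δ^2 * x^2 = x^2 * ((1 - t)^2 + δ^2) := by ring
    have hsq : Real.sqrt ((x - x*t)^2 + δ^2 * x^2)
        = x * Real.sqrt ((1 - t)^2 + δ^2) := by
      rw [hden, Real.sqrt_mul (sq_nonneg x), Real.sqrt_sq hx.le]
    have hx32 : x ^ (-(3/2):ℝ) = x ^ (-(1/2):ℝ) * x⁻¹ := by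
      rw [← Real.rpow_neg_one x, ← Real.rpow_add hx]; norm_num
    rw [hnum, hsq, ← ENNReal.ofReal_mul (Real.rpow_nonneg hx.le _)]
    congr 1
    rw [hx32]
    rw [div_eq_mul_inv, div_eq_mul_inv, mul_inv]
    ring
  rw [hcong, lintegral_const_mul' _ _ ENNReal.ofReal_ne_top]
  calc ENNReal.ofReal x * (ENNReal.ofReal (x ^ (-(3/2):ℝ))
        * ∫⁻ t in Set.Ioi (0:ℝ), ENNReal.ofReal (t ^ (-(1/2):ℝ) / Real.sqrt ((1 - t)^2 + δ^2)))
      ≤ ENNReal.ofReal x * (ENNReal.ofReal (x ^ (-(3/2):ℝ))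
          * ENNReal.ofReal (30 * Real.log (1/δ))) := by
        gcongr
        exact core_est hδ0 hδ1
    _ = ENNReal.ofReal (x * x ^ (-(3/2):ℝ)) * ENNReal.ofReal (30 * Real.log (1/δ)) := by
        rw [← mul_assoc, ← ENNReal.ofReal_mul hx.le]
    _ ≤ ENNReal.ofReal (120 * Real.log (1/δ)) * ENNReal.ofReal (x ^ (-(1/2):ℝ)) := by
        have hxx : x * x ^ (-(3/2):ℝ) = x ^ (-(1/2):ℝ) := by
          nth_rewrite 1 [← Real.rpow_one x]
          rw [← Real.rpow_add hx]
          norm_num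
        rw [hxx, mul_comm]
        exact mul_le_mul_left (ENNReal.ofReal_le_ofReal (by linarith)) _

lemma schur2 {δ y : ℝ} (hδ0 : 0 < δ) (hδ1 : δ ≤ 1/2) (hy : 0 < y) :
    ∫⁻ x in Set.Ioi (0:ℝ),
        ENNReal.ofReal (x ^ (-(1/2):ℝ) / Real.sqrt ((x - y)^2 + δ^2 * x^2))
      ≤ ENNReal.ofReal (120 * Real.log (1/δ)) * ENNReal.ofReal (y ^ (-(1/2):ℝ)) := by
  have hL0 : 0 < Real.log (1/δ) := Real.log_pos (by rw [lt_div_iff₀ hδ0]; linarith)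
  have hlog2 : Real.log 2 ≤ Real.log (1/δ) :=
    Real.log_le_log (by norm_num) (by rw [le_div_iff₀ hδ0]; linarith)
  rw [lintegral_Ioi_scale hy kernel_meas']
  have hcong : ∫⁻ s in Set.Ioi (0:ℝ),
      ENNReal.ofReal ((y*s) ^ (-(1/2):ℝ) / Real.sqrt ((y*s - y)^2 + δ^2 * (y*s)^2))
      = ∫⁻ s in Set.Ioi (0:ℝ), ENNReal.ofReal (y ^ (-(3/2):ℝ))
          * ENNReal.ofReal (s ^ (-(1/2):ℝ) / Real.sqrt ((s - 1)^2 + δ^2 * s^2)) := by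
    refine lintegral_congr_ae ?_
    filter_upwards [ae_restrict_mem measurableSet_Ioi] with s hs
    have hs0 : (0:ℝ) < s := hs
    have hnum : (y*s) ^ (-(1/2):ℝ) = y ^ (-(1/2):ℝ) * s ^ (-(1/2):ℝ) :=
      Real.mul_rpow hy.le hs0.le
    have hden : (y*s - y)^2 + δ^2 * (y*s)^2 = y^2 * ((s - 1)^2 + δ^2 * s^2) := by ring
    have hsq : Real.sqrt ((y*s - y)^2 + δ^2 * (y*s)^2)
        = y * Real.sqrt ((s - 1)^2 + δ^2 * s^2) := by
      rw [hden, Real.sqrt_mul (sq_nonneg y), Real.sqrt_sq hy.le]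
    have hy32 : y ^ (-(3/2):ℝ) = y ^ (-(1/2):ℝ) * y⁻¹ := by
      rw [← Real.rpow_neg_one y, ← Real.rpow_add hy]; norm_num
    rw [hnum, hsq, ← ENNReal.ofReal_mul (Real.rpow_nonneg hy.le _)]
    congr 1
    rw [hy32, div_eq_mul_inv, div_eq_mul_inv, mul_inv]
    ring
  rw [hcong, lintegral_const_mul' _ _ ENNReal.ofReal_ne_top]
  have hpt : ∀ s : ℝ, 0 < s →
      s ^ (-(1/2):ℝ) / Real.sqrt ((s - 1)^2 + δ^2 * s^2)
        ≤ 2 * (s ^ (-(1/2):ℝ) / Real.sqrt ((1 - s)^2 + (δ/2)^2)) := by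
    intro s hs
    have hW0 : 0 < (1 - s)^2 + (δ/2)^2 := by positivity
    have hB0 : 0 < (s - 1)^2 + δ^2 * s^2 := by
      rcases le_or_gt s (1/2) with h | h
      · nlinarith [sq_nonneg (δ*s),
          mul_nonneg (by linarith : (0:ℝ) ≤ 1/2 - s) (by linarith : (0:ℝ) ≤ 3/2 - s)]
      · nlinarith [sq_nonneg (s-1), mul_pos (mul_pos hδ0 hδ0) (mul_pos hs hs)]
    have hW4B : (1 - s)^2 + (δ/2)^2 ≤ 4 * ((s - 1)^2 + δ^2 * s^2) := by
      rcases le_or_gt s (1/2) with h | h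
      · nlinarith [sq_nonneg (δ*s),
          mul_nonneg (by linarith : (0:ℝ) ≤ 1/2 - s) (by linarith : (0:ℝ) ≤ 3/2 - s),
          mul_le_mul hδ1 hδ1 hδ0.le (by norm_num : (0:ℝ) ≤ 1/2)]
      · have h4s : (0:ℝ) ≤ s^2 - 1/4 := by nlinarith
        nlinarith [sq_nonneg (s-1), mul_nonneg (sq_nonneg δ) h4s, sq_nonneg δ]
    have hsqrt : Real.sqrt ((1 - s)^2 + (δ/2)^2)
        ≤ 2 * Real.sqrt ((s - 1)^2 + δ^2 * s^2) := by
      have h4 : (2:ℝ) * Real.sqrt ((s - 1)^2 + δ^2 * s^2)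
          = Real.sqrt (4 * ((s - 1)^2 + δ^2 * s^2)) := by
        rw [show (4:ℝ) = 2^2 by norm_num,
          Real.sqrt_mul (by positivity) ((s - 1)^2 + δ^2 * s^2),
          Real.sqrt_sq (by norm_num)]
      rw [h4]
      exact Real.sqrt_le_sqrt hW4B
    have hnn : (0:ℝ) ≤ s ^ (-(1/2):ℝ) := Real.rpow_nonneg hs.le _
    rw [← mul_div_assoc, div_le_div_iff₀ (Real.sqrt_pos.2 hB0) (Real.sqrt_pos.2 hW0)]
    calc s ^ (-(1/2):ℝ) * Real.sqrt ((1 - s)^2 + (δ/2)^2)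
          ≤ s ^ (-(1/2):ℝ) * (2 * Real.sqrt ((s - 1)^2 + δ^2 * s^2)) :=
          mul_le_mul_of_nonneg_left hsqrt hnn
      _ = 2 * s ^ (-(1/2):ℝ) * Real.sqrt ((s - 1)^2 + δ^2 * s^2) := by ring
  have hin : ∫⁻ s in Set.Ioi (0:ℝ),
      ENNReal.ofReal (s ^ (-(1/2):ℝ) / Real.sqrt ((s - 1)^2 + δ^2 * s^2))
      ≤ ENNReal.ofReal (120 * Real.log (1/δ)) := by
    calc ∫⁻ s in Set.Ioi (0:ℝ),
        ENNReal.ofReal (s ^ (-(1/2):ℝ) / Real.sqrt ((s - 1)^2 + δ^2 * s^2))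
        ≤ ∫⁻ s in Set.Ioi (0:ℝ),
            ENNReal.ofReal (2 * (s ^ (-(1/2):ℝ) / Real.sqrt ((1 - s)^2 + (δ/2)^2))) := by
          refine setLIntegral_mono' measurableSet_Ioi ?_
          intro s hs
          exact ENNReal.ofReal_le_ofReal (hpt s hs)
      _ = ENNReal.ofReal 2 * ∫⁻ s in Set.Ioi (0:ℝ),
            ENNReal.ofReal (s ^ (-(1/2):ℝ) / Real.sqrt ((1 - s)^2 + (δ/2)^2)) := by
          simp_rw [ENNReal.ofReal_mul (by norm_num : (0:ℝ) ≤ 2)]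
          rw [lintegral_const_mul' _ _ ENNReal.ofReal_ne_top]
      _ ≤ ENNReal.ofReal 2 * ENNReal.ofReal (30 * Real.log (1/(δ/2))) := by
          gcongr
          exact core_est (by positivity) (by linarith)
      _ ≤ ENNReal.ofReal (120 * Real.log (1/δ)) := by
          rw [← ENNReal.ofReal_mul (by norm_num)]
          apply ENNReal.ofReal_le_ofReal
          have heq : (1:ℝ)/(δ/2) = 2 * (1/δ) := by field_simp
          have hlogeq : Real.log (1/(δ/2)) = Real.log 2 + Real.log (1/δ) := by
            rw [heq, Real.log_mul (by norm_num) (by positivity)]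
          rw [hlogeq]
          linarith
  calc ENNReal.ofReal y * (ENNReal.ofReal (y ^ (-(3/2):ℝ))
        * ∫⁻ s in Set.Ioi (0:ℝ),
            ENNReal.ofReal (s ^ (-(1/2):ℝ) / Real.sqrt ((s - 1)^2 + δ^2 * s^2)))
      ≤ ENNReal.ofReal y * (ENNReal.ofReal (y ^ (-(3/2):ℝ))
          * ENNReal.ofReal (120 * Real.log (1/δ))) := by
        gcongr
    _ = ENNReal.ofReal (y * y ^ (-(3/2):ℝ)) * ENNReal.ofReal (120 * Real.log (1/δ)) := by
        rw [← mul_assoc, ← ENNReal.ofReal_mul hy.le]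
    _ = ENNReal.ofReal (120 * Real.log (1/δ)) * ENNReal.ofReal (y ^ (-(1/2):ℝ)) := by
        have hyy : y * y ^ (-(3/2):ℝ) = y ^ (-(1/2):ℝ) := by
          nth_rewrite 1 [← Real.rpow_one y]
          rw [← Real.rpow_add hy]
          norm_num
        rw [hyy, mul_comm]

/-- logarithmic bound for the singular double integral on `(0,∞)`:
`∬ |f(x)||g(y)|/√((x−y)² + δ²x²) ≤ C ln(1/δ) ‖f‖₂ ‖g‖₂`. -/
theorem singular_double_integral_halfline :
    ∃ C > (0 : ℝ), ∀ δ ∈ Set.Ioc (0 : ℝ) (1 / 2), ∀ f g : ℝ → ℂ,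
      MemLp f 2 (volume.restrict (Set.Ioi (0 : ℝ))) →
      MemLp g 2 (volume.restrict (Set.Ioi (0 : ℝ))) →
      (∫ x in Set.Ioi (0 : ℝ), ∫ y in Set.Ioi (0 : ℝ),
          ‖f x‖ * ‖g y‖ / Real.sqrt ((x - y) ^ 2 + δ ^ 2 * x ^ 2)) ≤
        C * Real.log (1 / δ) *
          Real.sqrt (∫ x in Set.Ioi (0 : ℝ), ‖f x‖ ^ 2) *
          Real.sqrt (∫ y in Set.Ioi (0 : ℝ), ‖g y‖ ^ 2) := by
  refine ⟨120, by norm_num, ?_⟩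
  rintro δ ⟨hδ0, hδ1⟩ f g hf hg
  have hL0 : 0 < Real.log (1/δ) := Real.log_pos (by rw [lt_div_iff₀ hδ0]; linarith)
  set μ := volume.restrict (Set.Ioi (0:ℝ)) with hμ
  set L := Real.log (1/δ) with hLdef
  -- real-valued kernel
  set k : ℝ → ℝ → ℝ :=
    fun x y => ‖f x‖ * ‖g y‖ / Real.sqrt ((x - y) ^ 2 + δ ^ 2 * x ^ 2) with hkdef
  have hk0 : ∀ x y, 0 ≤ k x y := by intro x y; rw [hkdef]; positivity
  -- measurability
  have hfm : AEMeasurable (fun x => ‖f x‖) μ := hf.1.norm.aemeasurable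
  have hgm : AEMeasurable (fun x => ‖g x‖) μ := hg.1.norm.aemeasurable
  have hsm : Measurable (fun p : ℝ × ℝ => Real.sqrt ((p.1 - p.2)^2 + δ^2 * p.1^2)) :=
    (Real.continuous_sqrt.comp
      ((((continuous_fst.sub continuous_snd).pow 2)).add
        (continuous_const.mul (continuous_fst.pow 2)))).measurable
  have hkm : AEStronglyMeasurable (fun p : ℝ × ℝ => k p.1 p.2) (μ.prod μ) :=
    ((hfm.comp_fst.mul hgm.comp_snd).div hsm.aemeasurable).aestronglyMeasurable
  -- ennreal pieces
  set κ : ℝ × ℝ → ℝ≥0∞ :=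
    fun p => ENNReal.ofReal (1 / Real.sqrt ((p.1 - p.2)^2 + δ^2 * p.1^2)) with hκdef
  have hκm : Measurable κ := (measurable_const.div hsm).ennreal_ofReal
  set w : ℝ → ℝ≥0∞ := fun x => ENNReal.ofReal (x ^ (-(1/2):ℝ)) with hwdef
  have hwm : Measurable w := (measurable_id.pow_const _).ennreal_ofReal
  set F : ℝ × ℝ → ℝ≥0∞ := fun p => ENNReal.ofReal ‖f p.1‖ with hFdef
  set G : ℝ × ℝ → ℝ≥0∞ := fun p => ENNReal.ofReal ‖g p.2‖ with hGdef
  have hFm : AEMeasurable F (μ.prod μ) := (hfm.ennreal_ofReal).comp_fst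
  have hGm : AEMeasurable G (μ.prod μ) := (hgm.ennreal_ofReal).comp_snd
  set H1 : ℝ × ℝ → ℝ≥0∞ := fun p => F p ^ 2 * κ p * w p.2 * (w p.1)⁻¹ with hH1def
  set H2 : ℝ × ℝ → ℝ≥0∞ := fun p => G p ^ 2 * κ p * w p.1 * (w p.2)⁻¹ with hH2def
  have hH1m : AEMeasurable H1 (μ.prod μ) :=
    (((hFm.pow_const 2).mul hκm.aemeasurable).mul
      (hwm.comp measurable_snd).aemeasurable).mul
      (hwm.comp measurable_fst).aemeasurable.inv
  have hH2m : AEMeasurable H2 (μ.prod μ) :=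
    (((hGm.pow_const 2).mul hκm.aemeasurable).mul
      (hwm.comp measurable_fst).aemeasurable).mul
      (hwm.comp measurable_snd).aemeasurable.inv
  set P1 : ℝ × ℝ → ℝ≥0∞ := fun p => H1 p ^ ((1:ℝ)/2) with hP1def
  set P2 : ℝ × ℝ → ℝ≥0∞ := fun p => H2 p ^ ((1:ℝ)/2) with hP2def
  have hP1m : AEMeasurable P1 (μ.prod μ) := hH1m.pow aemeasurable_const
  have hP2m : AEMeasurable P2 (μ.prod μ) := hH2m.pow aemeasurable_const
  set KK : ℝ × ℝ → ℝ≥0∞ := fun p => ENNReal.ofReal (k p.1 p.2) with hKKdef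
  have hKKm : AEMeasurable KK (μ.prod μ) := hkm.aemeasurable.ennreal_ofReal
  -- a.e. membership in the positive quadrant
  have hprodeq : μ.prod μ
      = (volume.prod volume).restrict ((Set.Ioi (0:ℝ)) ×ˢ (Set.Ioi (0:ℝ))) := by
    rw [hμ, Measure.prod_restrict]
  have hae : ∀ᵐ p ∂(μ.prod μ), p ∈ (Set.Ioi (0:ℝ)) ×ˢ (Set.Ioi (0:ℝ)) := by
    rw [hprodeq]
    exact ae_restrict_mem (measurableSet_Ioi.prod measurableSet_Ioi)
  -- pointwise factorization
  have heq : ∀ᵐ p ∂(μ.prod μ), KK p = P1 p * P2 p := by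
    filter_upwards [hae] with p hp
    have hx : (0:ℝ) < p.1 := hp.1
    have hy : (0:ℝ) < p.2 := hp.2
    have hw1pos : (0:ℝ≥0∞) < w p.1 := by
      rw [hwdef]; exact ENNReal.ofReal_pos.2 (Real.rpow_pos_of_pos hx _)
    have hw2pos : (0:ℝ≥0∞) < w p.2 := by
      rw [hwdef]; exact ENNReal.ofReal_pos.2 (Real.rpow_pos_of_pos hy _)
    have hw1top : w p.1 ≠ ∞ := ENNReal.ofReal_ne_top
    have hw2top : w p.2 ≠ ∞ := ENNReal.ofReal_ne_top
    have hfact : KK p = F p * G p * κ p := by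
      rw [hKKdef, hkdef, hFdef, hGdef, hκdef]
      simp only
      rw [div_eq_mul_inv, ← ENNReal.ofReal_mul (norm_nonneg _),
        ← ENNReal.ofReal_mul (by positivity)]
      congr 1
      rw [one_div]
    have hmulHH : H1 p * H2 p = (F p * G p * κ p) ^ 2 := by
      rw [hH1def, hH2def]
      simp only
      calc F p ^ 2 * κ p * w p.2 * (w p.1)⁻¹ * (G p ^ 2 * κ p * w p.1 * (w p.2)⁻¹)
          = (F p * G p * κ p) ^ 2 * ((w p.1)⁻¹ * w p.1) * ((w p.2)⁻¹ * w p.2) := by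
            ring
        _ = (F p * G p * κ p) ^ 2 := by
            rw [ENNReal.inv_mul_cancel hw1pos.ne' hw1top,
              ENNReal.inv_mul_cancel hw2pos.ne' hw2top, mul_one, mul_one]
    rw [hfact, hP1def, hP2def]
    simp only
    rw [← ENNReal.mul_rpow_of_nonneg _ _ (by norm_num : (0:ℝ) ≤ 1/2), hmulHH,
      ← ENNReal.rpow_natCast (F p * G p * κ p) 2, ← ENNReal.rpow_mul]
    norm_num
  -- Cauchy–Schwarz
  have hCS : ∫⁻ p, KK p ∂(μ.prod μ)
      ≤ (∫⁻ p, H1 p ∂(μ.prod μ)) ^ ((1:ℝ)/2) * (∫⁻ p, H2 p ∂(μ.prod μ)) ^ ((1:ℝ)/2) := by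
    have hconj : Real.HolderConjugate 2 2 := Real.HolderConjugate.two_two
    have h := ENNReal.lintegral_mul_le_Lp_mul_Lq (μ.prod μ) hconj hP1m hP2m
    have hexp : ∀ (X : ℝ≥0∞), (X ^ ((1:ℝ)/2)) ^ (2:ℝ) = X := by
      intro X
      rw [← ENNReal.rpow_mul]
      norm_num
    calc ∫⁻ p, KK p ∂(μ.prod μ) = ∫⁻ p, (P1 * P2) p ∂(μ.prod μ) := lintegral_congr_ae heq
      _ ≤ (∫⁻ p, P1 p ^ (2:ℝ) ∂(μ.prod μ)) ^ ((1:ℝ)/2)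
          * (∫⁻ p, P2 p ^ (2:ℝ) ∂(μ.prod μ)) ^ ((1:ℝ)/2) := h
      _ = (∫⁻ p, H1 p ∂(μ.prod μ)) ^ ((1:ℝ)/2)
          * (∫⁻ p, H2 p ∂(μ.prod μ)) ^ ((1:ℝ)/2) := by
          congr 1
          · congr 1
            exact lintegral_congr fun p => hexp _
          · congr 1
            exact lintegral_congr fun p => hexp _
  -- Schur bound for H1
  have hH1b : ∫⁻ p, H1 p ∂(μ.prod μ)
      ≤ ENNReal.ofReal (120 * L) * ∫⁻ x, (ENNReal.ofReal ‖f x‖) ^ 2 ∂μ := by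
    rw [lintegral_prod _ hH1m]
    calc ∫⁻ x, ∫⁻ y, H1 (x, y) ∂μ ∂μ
        ≤ ∫⁻ x, ENNReal.ofReal (120 * L) * (ENNReal.ofReal ‖f x‖) ^ 2 ∂μ := by
          refine lintegral_mono_ae ?_
          filter_upwards [ae_restrict_mem measurableSet_Ioi] with x hx
          have hx0 : (0:ℝ) < x := hx
          have hw1pos : (0:ℝ≥0∞) < w x :=
            ENNReal.ofReal_pos.2 (Real.rpow_pos_of_pos hx0 _)
          have hcne : (ENNReal.ofReal ‖f x‖) ^ 2 * (w x)⁻¹ ≠ ∞ :=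
            ENNReal.mul_ne_top (ENNReal.pow_ne_top ENNReal.ofReal_ne_top) (ENNReal.inv_ne_top.2 hw1pos.ne')
          calc ∫⁻ y, H1 (x, y) ∂μ
              = ∫⁻ y, ((ENNReal.ofReal ‖f x‖) ^ 2 * (w x)⁻¹) * (κ (x, y) * w y) ∂μ := by
                refine lintegral_congr fun y => ?_
                rw [hH1def]; simp only [hFdef]; ring
            _ = ((ENNReal.ofReal ‖f x‖) ^ 2 * (w x)⁻¹)
                * ∫⁻ y, κ (x, y) * w y ∂μ := lintegral_const_mul' _ _ hcne
            _ ≤ ((ENNReal.ofReal ‖f x‖) ^ 2 * (w x)⁻¹)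
                * (ENNReal.ofReal (120 * L) * w x) := by
                gcongr
                have hker : ∀ y : ℝ, κ (x, y) * w y
                    = ENNReal.ofReal (y ^ (-(1/2):ℝ)
                        / Real.sqrt ((x - y)^2 + δ^2 * x^2)) := by
                  intro y
                  rw [hκdef, hwdef]
                  simp only
                  rw [← ENNReal.ofReal_mul (by positivity)]
                  congr 1
                  rw [one_div, div_eq_mul_inv]
                  ring
                calc ∫⁻ y, κ (x, y) * w y ∂μ
                    = ∫⁻ y in Set.Ioi (0:ℝ), ENNReal.ofReal (y ^ (-(1/2):ℝ)
                        / Real.sqrt ((x - y)^2 + δ^2 * x^2)) := by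
                      rw [hμ]; exact lintegral_congr fun y => hker y
                  _ ≤ ENNReal.ofReal (120 * Real.log (1/δ))
                        * ENNReal.ofReal (x ^ (-(1/2):ℝ)) := schur1 hδ0 hδ1 hx0
                  _ = ENNReal.ofReal (120 * L) * w x := by rw [hwdef, hLdef]
            _ = ENNReal.ofReal (120 * L)
                * ((ENNReal.ofReal ‖f x‖) ^ 2 * ((w x)⁻¹ * w x)) := by ring
            _ = ENNReal.ofReal (120 * L) * (ENNReal.ofReal ‖f x‖) ^ 2 := by
                rw [ENNReal.inv_mul_cancel hw1pos.ne' ENNReal.ofReal_ne_top, mul_one]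
      _ = ENNReal.ofReal (120 * L) * ∫⁻ x, (ENNReal.ofReal ‖f x‖) ^ 2 ∂μ :=
          lintegral_const_mul' _ _ ENNReal.ofReal_ne_top
  -- Schur bound for H2
  have hH2b : ∫⁻ p, H2 p ∂(μ.prod μ)
      ≤ ENNReal.ofReal (120 * L) * ∫⁻ y, (ENNReal.ofReal ‖g y‖) ^ 2 ∂μ := by
    rw [lintegral_prod_symm _ hH2m]
    calc ∫⁻ y, ∫⁻ x, H2 (x, y) ∂μ ∂μ
        ≤ ∫⁻ y, ENNReal.ofReal (120 * L) * (ENNReal.ofReal ‖g y‖) ^ 2 ∂μ := by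
          refine lintegral_mono_ae ?_
          filter_upwards [ae_restrict_mem measurableSet_Ioi] with y hy
          have hy0 : (0:ℝ) < y := hy
          have hw2pos : (0:ℝ≥0∞) < w y :=
            ENNReal.ofReal_pos.2 (Real.rpow_pos_of_pos hy0 _)
          have hcne : (ENNReal.ofReal ‖g y‖) ^ 2 * (w y)⁻¹ ≠ ∞ :=
            ENNReal.mul_ne_top (ENNReal.pow_ne_top ENNReal.ofReal_ne_top) (ENNReal.inv_ne_top.2 hw2pos.ne')
          calc ∫⁻ x, H2 (x, y) ∂μ
              = ∫⁻ x, ((ENNReal.ofReal ‖g y‖) ^ 2 * (w y)⁻¹) * (κ (x, y) * w x) ∂μ := by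
                refine lintegral_congr fun x => ?_
                rw [hH2def]; simp only [hGdef]; ring
            _ = ((ENNReal.ofReal ‖g y‖) ^ 2 * (w y)⁻¹)
                * ∫⁻ x, κ (x, y) * w x ∂μ := lintegral_const_mul' _ _ hcne
            _ ≤ ((ENNReal.ofReal ‖g y‖) ^ 2 * (w y)⁻¹)
                * (ENNReal.ofReal (120 * L) * w y) := by
                gcongr
                have hker : ∀ x : ℝ, κ (x, y) * w x
                    = ENNReal.ofReal (x ^ (-(1/2):ℝ)
                        / Real.sqrt ((x - y)^2 + δ^2 * x^2)) := by
                  intro x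
                  rw [hκdef, hwdef]
                  simp only
                  rw [← ENNReal.ofReal_mul (by positivity)]
                  congr 1
                  rw [one_div, div_eq_mul_inv]
                  ring
                calc ∫⁻ x, κ (x, y) * w x ∂μ
                    = ∫⁻ x in Set.Ioi (0:ℝ), ENNReal.ofReal (x ^ (-(1/2):ℝ)
                        / Real.sqrt ((x - y)^2 + δ^2 * x^2)) := by
                      rw [hμ]; exact lintegral_congr fun x => hker x
                  _ ≤ ENNReal.ofReal (120 * Real.log (1/δ))
                        * ENNReal.ofReal (y ^ (-(1/2):ℝ)) := schur2 hδ0 hδ1 hy0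
                  _ = ENNReal.ofReal (120 * L) * w y := by rw [hwdef, hLdef]
            _ = ENNReal.ofReal (120 * L)
                * ((ENNReal.ofReal ‖g y‖) ^ 2 * ((w y)⁻¹ * w y)) := by ring
            _ = ENNReal.ofReal (120 * L) * (ENNReal.ofReal ‖g y‖) ^ 2 := by
                rw [ENNReal.inv_mul_cancel hw2pos.ne' ENNReal.ofReal_ne_top, mul_one]
      _ = ENNReal.ofReal (120 * L) * ∫⁻ y, (ENNReal.ofReal ‖g y‖) ^ 2 ∂μ :=
          lintegral_const_mul' _ _ ENNReal.ofReal_ne_top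
  -- L² integrability of the squared norms
  have hfint : Integrable (fun x => ‖f x‖^2) μ := by
    have h2 := hf.integrable_norm_rpow (by norm_num) (by norm_num)
    have heq : (fun x => ‖f x‖ ^ (2:ℝ≥0∞).toReal) = fun x => ‖f x‖^2 := by
      funext x
      rw [ENNReal.toReal_ofNat, show ((2:ℝ)) = ((2:ℕ):ℝ) by norm_num, Real.rpow_natCast]
    rwa [heq] at h2
  have hgint : Integrable (fun x => ‖g x‖^2) μ := by
    have h2 := hg.integrable_norm_rpow (by norm_num) (by norm_num)
    have heq : (fun x => ‖g x‖ ^ (2:ℝ≥0∞).toReal) = fun x => ‖g x‖^2 := by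
      funext x
      rw [ENNReal.toReal_ofNat, show ((2:ℝ)) = ((2:ℕ):ℝ) by norm_num, Real.rpow_natCast]
    rwa [heq] at h2
  have hNf0 : (0:ℝ) ≤ ∫ x, ‖f x‖^2 ∂μ := integral_nonneg fun x => sq_nonneg _
  have hNg0 : (0:ℝ) ≤ ∫ x, ‖g x‖^2 ∂μ := integral_nonneg fun x => sq_nonneg _
  have hNfeq : ∫⁻ x, (ENNReal.ofReal ‖f x‖) ^ 2 ∂μ
      = ENNReal.ofReal (∫ x, ‖f x‖^2 ∂μ) := by
    rw [MeasureTheory.ofReal_integral_eq_lintegral_ofReal hfint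
      (ae_of_all _ fun x => sq_nonneg _)]
    exact lintegral_congr fun x => (ENNReal.ofReal_pow (norm_nonneg _) 2).symm
  have hNgeq : ∫⁻ x, (ENNReal.ofReal ‖g x‖) ^ 2 ∂μ
      = ENNReal.ofReal (∫ x, ‖g x‖^2 ∂μ) := by
    rw [MeasureTheory.ofReal_integral_eq_lintegral_ofReal hgint
      (ae_of_all _ fun x => sq_nonneg _)]
    exact lintegral_congr fun x => (ENNReal.ofReal_pow (norm_nonneg _) 2).symm
  -- the double lintegral bound
  have hA0 : (ENNReal.ofReal (120 * L)) ≠ 0 :=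
    (ENNReal.ofReal_pos.2 (by linarith)).ne'
  have hDL : ∫⁻ x, ∫⁻ y, ENNReal.ofReal (k x y) ∂μ ∂μ
      ≤ ENNReal.ofReal (120 * L * Real.sqrt (∫ x, ‖f x‖^2 ∂μ)
          * Real.sqrt (∫ y, ‖g y‖^2 ∂μ)) := by
    calc ∫⁻ x, ∫⁻ y, ENNReal.ofReal (k x y) ∂μ ∂μ
        = ∫⁻ p, KK p ∂(μ.prod μ) := (lintegral_prod _ hKKm).symm
      _ ≤ (∫⁻ p, H1 p ∂(μ.prod μ)) ^ ((1:ℝ)/2)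
          * (∫⁻ p, H2 p ∂(μ.prod μ)) ^ ((1:ℝ)/2) := hCS
      _ ≤ (ENNReal.ofReal (120 * L) * ENNReal.ofReal (∫ x, ‖f x‖^2 ∂μ)) ^ ((1:ℝ)/2)
          * (ENNReal.ofReal (120 * L) * ENNReal.ofReal (∫ y, ‖g y‖^2 ∂μ)) ^ ((1:ℝ)/2) := by
          refine mul_le_mul' (ENNReal.rpow_le_rpow ?_ (by norm_num))
            (ENNReal.rpow_le_rpow ?_ (by norm_num))
          · exact hH1b.trans_eq (by rw [hNfeq])
          · exact hH2b.trans_eq (by rw [hNgeq])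
      _ = ENNReal.ofReal (120 * L * Real.sqrt (∫ x, ‖f x‖^2 ∂μ)
            * Real.sqrt (∫ y, ‖g y‖^2 ∂μ)) := by
          rw [ENNReal.mul_rpow_of_nonneg _ _ (by norm_num : (0:ℝ) ≤ 1/2),
            ENNReal.mul_rpow_of_nonneg _ _ (by norm_num : (0:ℝ) ≤ 1/2)]
          have hAA : (ENNReal.ofReal (120 * L)) ^ ((1:ℝ)/2)
              * (ENNReal.ofReal (120 * L)) ^ ((1:ℝ)/2) = ENNReal.ofReal (120 * L) := by
            rw [← ENNReal.rpow_add _ _ hA0 ENNReal.ofReal_ne_top]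
            norm_num
          calc (ENNReal.ofReal (120 * L)) ^ ((1:ℝ)/2)
                * (ENNReal.ofReal (∫ x, ‖f x‖^2 ∂μ)) ^ ((1:ℝ)/2)
                * ((ENNReal.ofReal (120 * L)) ^ ((1:ℝ)/2)
                  * (ENNReal.ofReal (∫ y, ‖g y‖^2 ∂μ)) ^ ((1:ℝ)/2))
              = ((ENNReal.ofReal (120 * L)) ^ ((1:ℝ)/2)
                  * (ENNReal.ofReal (120 * L)) ^ ((1:ℝ)/2))
                * ((ENNReal.ofReal (∫ x, ‖f x‖^2 ∂μ)) ^ ((1:ℝ)/2)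
                  * (ENNReal.ofReal (∫ y, ‖g y‖^2 ∂μ)) ^ ((1:ℝ)/2)) := by ring
            _ = ENNReal.ofReal (120 * L * Real.sqrt (∫ x, ‖f x‖^2 ∂μ)
                  * Real.sqrt (∫ y, ‖g y‖^2 ∂μ)) := by
                rw [hAA, ENNReal.ofReal_rpow_of_nonneg hNf0 (by norm_num),
                  ENNReal.ofReal_rpow_of_nonneg hNg0 (by norm_num),
                  ← ENNReal.ofReal_mul (by positivity),
                  ← ENNReal.ofReal_mul (by positivity)]
                congr 1
                rw [Real.sqrt_eq_rpow, Real.sqrt_eq_rpow]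
                ring
  -- from Bochner integral to lintegral
  have hΦm : AEStronglyMeasurable (fun x => ∫ y, k x y ∂μ) μ :=
    hkm.integral_prod_right'
  have hstep1 : ∫ x, (∫ y, k x y ∂μ) ∂μ
      ≤ (∫⁻ x, ENNReal.ofReal (∫ y, k x y ∂μ) ∂μ).toReal := by
    by_cases hi : Integrable (fun x => ∫ y, k x y ∂μ) μ
    · rw [integral_eq_lintegral_of_nonneg_ae
        (ae_of_all _ fun x => integral_nonneg fun y => hk0 x y) hΦm]
    · rw [integral_undef hi]
      exact ENNReal.toReal_nonneg
  have hstep2 : ∫⁻ x, ENNReal.ofReal (∫ y, k x y ∂μ) ∂μ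
      ≤ ∫⁻ x, ∫⁻ y, ENNReal.ofReal (k x y) ∂μ ∂μ := by
    refine lintegral_mono fun x => ?_
    by_cases hix : Integrable (fun y => k x y) μ
    · rw [MeasureTheory.ofReal_integral_eq_lintegral_ofReal hix
        (ae_of_all _ fun y => hk0 x y)]
    · rw [integral_undef hix]
      simp
  have hRHS0 : (0:ℝ) ≤ 120 * L * Real.sqrt (∫ x, ‖f x‖^2 ∂μ)
      * Real.sqrt (∫ y, ‖g y‖^2 ∂μ) := by positivity
  calc (∫ x in Set.Ioi (0:ℝ), ∫ y in Set.Ioi (0:ℝ),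
        ‖f x‖ * ‖g y‖ / Real.sqrt ((x - y) ^ 2 + δ ^ 2 * x ^ 2))
      = ∫ x, (∫ y, k x y ∂μ) ∂μ := rfl
    _ ≤ (∫⁻ x, ENNReal.ofReal (∫ y, k x y ∂μ) ∂μ).toReal := hstep1
    _ ≤ (ENNReal.ofReal (120 * L * Real.sqrt (∫ x, ‖f x‖^2 ∂μ)
          * Real.sqrt (∫ y, ‖g y‖^2 ∂μ))).toReal :=
        ENNReal.toReal_mono ENNReal.ofReal_ne_top (hstep2.trans hDL)
    _ = 120 * L * Real.sqrt (∫ x, ‖f x‖^2 ∂μ) * Real.sqrt (∫ y, ‖g y‖^2 ∂μ) :=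
        ENNReal.toReal_ofReal hRHS0
    _ = 120 * Real.log (1/δ) * Real.sqrt (∫ x, ‖f x‖^2 ∂μ)
        * Real.sqrt (∫ y, ‖g y‖^2 ∂μ) := by rw [hLdef]
end

section
/- There exists a universal constant C > 0 such that for every δ ∈ (0, 1/2] and all f, g ∈ L²(−1,1): ∫_{-1}^{1} ∫_{-1}^{1} |f(x)| |g(y)| / √((x − y)² + 4δ²) dx dy ≤ C · ln(1/δ) · ‖f‖_{L²(−1,1)} · ‖g‖_{L²(−1,1)}. -/
open MeasureTheory Set ENNReal

lemma arsinh_le_three_log {t : ℝ} (ht : 2 ≤ t) : Real.arsinh t ≤ 3 * Real.log t := by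
  have ht0 : (0:ℝ) < t := by linarith
  have h1 : Real.arsinh t ≤ Real.log (3 * t) := by
    rw [Real.le_log_iff_exp_le (by positivity), Real.exp_arsinh]
    have hs : Real.sqrt (1 + t ^ 2) ≤ 1 + t := by
      have := Real.sqrt_le_sqrt (show (1:ℝ) + t ^ 2 ≤ (1 + t) ^ 2 by nlinarith)
      rwa [Real.sqrt_sq (by positivity)] at this
    linarith
  have h2 : Real.log (3 * t) = Real.log 3 + Real.log t :=
    Real.log_mul (by norm_num) (ne_of_gt ht0)
  have h3 : Real.log 3 ≤ 2 * Real.log t := by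
    have := Real.log_le_log (by norm_num) (show (3:ℝ) ≤ t ^ 2 by nlinarith)
    rwa [Real.log_pow, Nat.cast_ofNat] at this
  linarith

lemma kernel_bound {c : ℝ} (hc : 0 < c) {x : ℝ} (hx : x ∈ Set.Ioo (-1:ℝ) 1) :
    ∫⁻ y in Set.Ioo (-1:ℝ) 1, ENNReal.ofReal ((Real.sqrt ((x - y) ^ 2 + c ^ 2))⁻¹) ≤
      ENNReal.ofReal (2 * Real.arsinh (2 / c)) := by
  have hpos : ∀ y : ℝ, 0 < Real.sqrt ((x - y) ^ 2 + c ^ 2) := fun y =>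
    Real.sqrt_pos.2 (by positivity)
  have hcont : Continuous fun y : ℝ => (Real.sqrt ((x - y) ^ 2 + c ^ 2))⁻¹ := by
    refine Continuous.inv₀ (Real.continuous_sqrt.comp (by continuity)) fun y => (hpos y).ne'
  have hint : IntegrableOn (fun y : ℝ => (Real.sqrt ((x - y) ^ 2 + c ^ 2))⁻¹) (Set.Ioo (-1) 1) :=
    (hcont.continuousOn.integrableOn_compact isCompact_Icc).mono_set Set.Ioo_subset_Icc_self
  rw [← MeasureTheory.ofReal_integral_eq_lintegral_ofReal hint
    (Filter.Eventually.of_forall fun y => by positivity)]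
  refine ENNReal.ofReal_le_ofReal ?_
  have key : ∀ y ∈ Set.uIcc (-1:ℝ) 1, HasDerivAt (fun y => Real.arsinh ((y - x) / c))
      ((Real.sqrt ((x - y) ^ 2 + c ^ 2))⁻¹) y := by
    intro y _
    have hd : HasDerivAt (fun y : ℝ => (y - x) / c) (1 / c) y := by
      simpa using ((hasDerivAt_id y).sub_const x).div_const c
    have := (Real.hasDerivAt_arsinh ((y - x) / c)).comp y hd
    refine this.congr_deriv ?_
    have hmul : c * Real.sqrt (1 + ((y - x) / c) ^ 2) = Real.sqrt ((x - y) ^ 2 + c ^ 2) := by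
      rw [show (x - y) ^ 2 + c ^ 2 = c ^ 2 * (1 + ((y - x) / c) ^ 2) by
        field_simp; ring]
      rw [Real.sqrt_mul (by positivity), Real.sqrt_sq hc.le]
    rw [← hmul]
    field_simp
  have heq : ∫ y in Set.Ioo (-1:ℝ) 1, (Real.sqrt ((x - y) ^ 2 + c ^ 2))⁻¹ =
      Real.arsinh ((1 - x) / c) + Real.arsinh ((1 + x) / c) := by
    rw [← MeasureTheory.integral_Ioc_eq_integral_Ioo,
      ← intervalIntegral.integral_of_le (by norm_num : (-1:ℝ) ≤ 1),
      intervalIntegral.integral_eq_sub_of_hasDerivAt key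
        (hcont.intervalIntegrable _ _)]
    rw [show (-1 - x) / c = -((1 + x) / c) by ring, Real.arsinh_neg]
    ring
  rw [heq]
  obtain ⟨hx1, hx2⟩ := hx
  have b1 : Real.arsinh ((1 - x) / c) ≤ Real.arsinh (2 / c) :=
    Real.arsinh_le_arsinh.2 ((div_le_div_iff_of_pos_right hc).2 (by linarith))
  have b2 : Real.arsinh ((1 + x) / c) ≤ Real.arsinh (2 / c) :=
    Real.arsinh_le_arsinh.2 ((div_le_div_iff_of_pos_right hc).2 (by linarith))
  linarith

set_option maxHeartbeats 1000000 in
lemma schur_core {c A : ℝ} (hc : 0 < c) (hA : 0 < A)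
    (hker : ∀ x ∈ Set.Ioo (-1:ℝ) 1,
      (∫⁻ y in Set.Ioo (-1:ℝ) 1, ENNReal.ofReal ((Real.sqrt ((x - y) ^ 2 + c ^ 2))⁻¹)) ≤
        ENNReal.ofReal A)
    {F G : ℝ → ℝ≥0∞} (hF : Measurable F) (hG : Measurable G) :
    (∫⁻ x in Set.Ioo (-1:ℝ) 1, ∫⁻ y in Set.Ioo (-1:ℝ) 1,
        F x * G y * ENNReal.ofReal ((Real.sqrt ((x - y) ^ 2 + c ^ 2))⁻¹)) ≤
      ENNReal.ofReal A * (∫⁻ x in Set.Ioo (-1:ℝ) 1, F x ^ (2:ℝ)) ^ (1/2:ℝ) *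
        (∫⁻ y in Set.Ioo (-1:ℝ) 1, G y ^ (2:ℝ)) ^ (1/2:ℝ) := by
  set μ := volume.restrict (Set.Ioo (-1:ℝ) 1) with hμ
  set K : ℝ → ℝ → ℝ≥0∞ :=
    fun x y => ENNReal.ofReal ((Real.sqrt ((x - y) ^ 2 + c ^ 2))⁻¹) with hK
  have hspos : ∀ x y : ℝ, 0 < Real.sqrt ((x - y) ^ 2 + c ^ 2) := fun x y =>
    Real.sqrt_pos.2 (by positivity)
  have hKmeas : Measurable (Function.uncurry K) := by
    apply Measurable.ennreal_ofReal
    apply Measurable.inv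
    exact (Real.continuous_sqrt.comp (by continuity)).measurable
  have hKx : ∀ x, Measurable (K x) := fun x => by
    apply Measurable.ennreal_ofReal
    exact ((Real.continuous_sqrt.comp (by continuity)).measurable).inv
  have hKy : ∀ y, Measurable fun x => K x y := fun y => by
    apply Measurable.ennreal_ofReal
    exact ((Real.continuous_sqrt.comp (by continuity)).measurable).inv
  have hK0 : ∀ x y, K x y ≠ 0 := fun x y => by
    simp only [hK, ne_eq, ENNReal.ofReal_eq_zero, not_le]
    exact inv_pos.2 (hspos x y)
  have hKtop : ∀ x y, K x y ≠ ∞ := fun x y => ENNReal.ofReal_ne_top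
  have hq : Real.HolderConjugate 2 2 := by constructor <;> norm_num
  -- the Schur auxiliary function
  set H : ℝ → ℝ≥0∞ := fun x => (∫⁻ y, G y ^ (2:ℝ) * K x y ∂μ) ^ (1/2:ℝ) with hH
  have hHmeas : Measurable H := by
    apply Measurable.pow_const
    exact Measurable.lintegral_prod_right'
      ((hG.comp measurable_snd).pow_const _ |>.mul hKmeas)
  have hAhalf_ne_top : (ENNReal.ofReal A) ^ (1/2:ℝ) ≠ ∞ :=
    ENNReal.rpow_ne_top_of_nonneg (by norm_num) ENNReal.ofReal_ne_top
  -- inner Cauchy-Schwarz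
  have inner_bound : ∀ x ∈ Set.Ioo (-1:ℝ) 1,
      (∫⁻ y, G y * K x y ∂μ) ≤ H x * (ENNReal.ofReal A) ^ (1/2:ℝ) := by
    intro x hx
    have cs := ENNReal.lintegral_mul_le_Lp_mul_Lq μ hq
      (f := fun y => G y * K x y ^ (1/2:ℝ)) (g := fun y => K x y ^ (1/2:ℝ))
      ((hG.mul ((hKx x).pow_const _)).aemeasurable) (((hKx x).pow_const _).aemeasurable)
    have e1 : ∀ y, (fun y => G y * K x y ^ (1/2:ℝ)) y * (fun y => K x y ^ (1/2:ℝ)) y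
        = G y * K x y := by
      intro y
      simp only [mul_assoc]
      rw [← ENNReal.rpow_add _ _ (hK0 x y) (hKtop x y)]
      norm_num
    have e2 : ∀ y, (G y * K x y ^ (1/2:ℝ)) ^ (2:ℝ) = G y ^ (2:ℝ) * K x y := by
      intro y
      rw [ENNReal.mul_rpow_of_nonneg _ _ (by norm_num), ← ENNReal.rpow_mul]
      norm_num
    have e3 : ∀ y, (K x y ^ (1/2:ℝ)) ^ (2:ℝ) = K x y := by
      intro y
      rw [← ENNReal.rpow_mul]; norm_num
    simp only [Pi.mul_apply] at cs
    calc (∫⁻ y, G y * K x y ∂μ)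
        = ∫⁻ y, (G y * K x y ^ (1/2:ℝ)) * K x y ^ (1/2:ℝ) ∂μ := by
          refine lintegral_congr fun y => (e1 y).symm
      _ ≤ (∫⁻ y, (G y * K x y ^ (1/2:ℝ)) ^ (2:ℝ) ∂μ) ^ (1/2:ℝ) *
            (∫⁻ y, (K x y ^ (1/2:ℝ)) ^ (2:ℝ) ∂μ) ^ (1/2:ℝ) := cs
      _ = H x * (∫⁻ y, K x y ∂μ) ^ (1/2:ℝ) := by
          rw [hH]
          congr 1
          · congr 1; exact lintegral_congr fun y => e2 y
          · congr 1; exact lintegral_congr fun y => e3 y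
      _ ≤ H x * (ENNReal.ofReal A) ^ (1/2:ℝ) := by
          gcongr
          exact hker x hx
  -- outer estimate
  calc (∫⁻ x, ∫⁻ y, F x * G y * K x y ∂μ ∂μ)
      = ∫⁻ x, F x * ∫⁻ y, G y * K x y ∂μ ∂μ := by
        refine lintegral_congr fun x => ?_
        rw [← lintegral_const_mul _ (f := fun y => G y * K x y) (hG.mul (hKx x))]
        exact lintegral_congr fun y => by ring
    _ ≤ ∫⁻ x, (ENNReal.ofReal A) ^ (1/2:ℝ) * (F x * H x) ∂μ := by
        refine lintegral_mono_ae ?_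
        filter_upwards [ae_restrict_mem measurableSet_Ioo] with x hx
        calc F x * ∫⁻ y, G y * K x y ∂μ
            ≤ F x * (H x * (ENNReal.ofReal A) ^ (1/2:ℝ)) :=
              mul_le_mul_right (inner_bound x hx) _
          _ = (ENNReal.ofReal A) ^ (1/2:ℝ) * (F x * H x) := by ring
    _ = (ENNReal.ofReal A) ^ (1/2:ℝ) * ∫⁻ x, F x * H x ∂μ :=
        lintegral_const_mul' _ _ hAhalf_ne_top
    _ ≤ (ENNReal.ofReal A) ^ (1/2:ℝ) *
          ((∫⁻ x, F x ^ (2:ℝ) ∂μ) ^ (1/2:ℝ) * (∫⁻ x, H x ^ (2:ℝ) ∂μ) ^ (1/2:ℝ)) := by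
        gcongr
        exact ENNReal.lintegral_mul_le_Lp_mul_Lq μ hq hF.aemeasurable hHmeas.aemeasurable
    _ ≤ (ENNReal.ofReal A) ^ (1/2:ℝ) *
          ((∫⁻ x, F x ^ (2:ℝ) ∂μ) ^ (1/2:ℝ) *
            (ENNReal.ofReal A * ∫⁻ y, G y ^ (2:ℝ) ∂μ) ^ (1/2:ℝ)) := by
        gcongr
        -- ∫⁻ x, H x ^ 2 ≤ ofReal A * ∫⁻ G^2
        have hcancel : ∀ x, H x ^ (2:ℝ) = ∫⁻ y, G y ^ (2:ℝ) * K x y ∂μ := by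
          intro x; rw [hH, ← ENNReal.rpow_mul]; norm_num
        calc (∫⁻ x, H x ^ (2:ℝ) ∂μ)
            = ∫⁻ x, ∫⁻ y, G y ^ (2:ℝ) * K x y ∂μ ∂μ :=
              lintegral_congr fun x => hcancel x
          _ = ∫⁻ y, ∫⁻ x, G y ^ (2:ℝ) * K x y ∂μ ∂μ := by
              apply lintegral_lintegral_swap
              exact ((hG.comp measurable_snd).pow_const _ |>.mul hKmeas).aemeasurable
          _ = ∫⁻ y, G y ^ (2:ℝ) * ∫⁻ x, K x y ∂μ ∂μ :=
              lintegral_congr fun y => lintegral_const_mul _ (hKy y)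
          _ ≤ ∫⁻ y, G y ^ (2:ℝ) * ENNReal.ofReal A ∂μ := by
              refine lintegral_mono_ae ?_
              filter_upwards [ae_restrict_mem measurableSet_Ioo] with y hy
              refine mul_le_mul_right ?_ _
              have : ∀ x : ℝ, K x y = ENNReal.ofReal ((Real.sqrt ((y - x) ^ 2 + c ^ 2))⁻¹) := by
                intro x; rw [hK]; ring_nf
              calc (∫⁻ x, K x y ∂μ)
                  = ∫⁻ x in Set.Ioo (-1:ℝ) 1,
                      ENNReal.ofReal ((Real.sqrt ((y - x) ^ 2 + c ^ 2))⁻¹) :=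
                    lintegral_congr fun x => this x
                _ ≤ ENNReal.ofReal A := hker y hy
          _ = ENNReal.ofReal A * ∫⁻ y, G y ^ (2:ℝ) ∂μ := by
              rw [lintegral_mul_const _ (hG.pow_const _), mul_comm]
    _ = ENNReal.ofReal A * (∫⁻ x, F x ^ (2:ℝ) ∂μ) ^ (1/2:ℝ) *
          (∫⁻ y, G y ^ (2:ℝ) ∂μ) ^ (1/2:ℝ) := by
        rw [ENNReal.mul_rpow_of_nonneg _ _ (by norm_num : (0:ℝ) ≤ 1/2)]
        rw [show ((ENNReal.ofReal A) ^ (1/2:ℝ)) * ((∫⁻ x, F x ^ (2:ℝ) ∂μ) ^ (1/2:ℝ) *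
          ((ENNReal.ofReal A) ^ (1/2:ℝ) * (∫⁻ y, G y ^ (2:ℝ) ∂μ) ^ (1/2:ℝ))) =
          ((ENNReal.ofReal A) ^ (1/2:ℝ) * (ENNReal.ofReal A) ^ (1/2:ℝ)) *
          (∫⁻ x, F x ^ (2:ℝ) ∂μ) ^ (1/2:ℝ) * (∫⁻ y, G y ^ (2:ℝ) ∂μ) ^ (1/2:ℝ) by ring]
        congr 2
        rw [← ENNReal.rpow_add _ _ (by simp [ENNReal.ofReal_eq_zero]; linarith) ENNReal.ofReal_ne_top]
        norm_num

/-- logarithmic bound for the singular double integral on `(−1,1)`: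
`∬ |f(x)||g(y)|/√((x−y)² + 4δ²) ≤ C ln(1/δ) ‖f‖₂ ‖g‖₂`. -/
theorem singular_double_integral_interval :
    ∃ C > (0 : ℝ), ∀ δ ∈ Set.Ioc (0 : ℝ) (1 / 2), ∀ f g : ℝ → ℂ,
      MemLp f 2 (volume.restrict (Set.Ioo (-1 : ℝ) 1)) →
      MemLp g 2 (volume.restrict (Set.Ioo (-1 : ℝ) 1)) →
      (∫ x in Set.Ioo (-1 : ℝ) 1, ∫ y in Set.Ioo (-1 : ℝ) 1,
          ‖f x‖ * ‖g y‖ / Real.sqrt ((x - y) ^ 2 + 4 * δ ^ 2)) ≤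
        C * Real.log (1 / δ) *
          Real.sqrt (∫ x in Set.Ioo (-1 : ℝ) 1, ‖f x‖ ^ 2) *
          Real.sqrt (∫ y in Set.Ioo (-1 : ℝ) 1, ‖g y‖ ^ 2) := by
  refine ⟨6, by norm_num, ?_⟩
  rintro δ ⟨hδ0, hδh⟩ f g hf hg
  set μ := volume.restrict (Set.Ioo (-1 : ℝ) 1) with hμdef
  have hδ1 : (1:ℝ) < 1 / δ := by rw [lt_div_iff₀ hδ0]; linarith
  have hlog : 0 < Real.log (1 / δ) := Real.log_pos hδ1
  set A : ℝ := 6 * Real.log (1 / δ) with hAdef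
  have hA : 0 < A := by positivity
  have hc : (0:ℝ) < 2 * δ := by linarith
  have hsq : ∀ x y : ℝ, (x - y) ^ 2 + 4 * δ ^ 2 = (x - y) ^ 2 + (2 * δ) ^ 2 := by
    intro x y; ring
  -- kernel bound with the constant A
  have hker : ∀ x ∈ Set.Ioo (-1:ℝ) 1,
      (∫⁻ y in Set.Ioo (-1:ℝ) 1,
        ENNReal.ofReal ((Real.sqrt ((x - y) ^ 2 + (2 * δ) ^ 2))⁻¹)) ≤ ENNReal.ofReal A := by
    intro x hx
    refine (kernel_bound hc hx).trans (ENNReal.ofReal_le_ofReal ?_)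
    have h2 : (2:ℝ) / (2 * δ) = 1 / δ := by field_simp
    rw [h2, hAdef]
    have ht : (2:ℝ) ≤ 1 / δ := by rw [le_div_iff₀ hδ0]; linarith
    have := arsinh_le_three_log ht
    linarith
  -- measurable representatives
  have hFa : AEMeasurable (fun x => ENNReal.ofReal ‖f x‖) μ :=
    hf.aestronglyMeasurable.norm.aemeasurable.ennreal_ofReal
  have hGa : AEMeasurable (fun x => ENNReal.ofReal ‖g x‖) μ :=
    hg.aestronglyMeasurable.norm.aemeasurable.ennreal_ofReal
  set F : ℝ → ℝ≥0∞ := hFa.mk (fun x => ENNReal.ofReal ‖f x‖) with hFdef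
  set G : ℝ → ℝ≥0∞ := hGa.mk (fun x => ENNReal.ofReal ‖g x‖) with hGdef
  have hFm : Measurable F := hFa.measurable_mk
  have hGm : Measurable G := hGa.measurable_mk
  have hFe : (fun x => ENNReal.ofReal ‖f x‖) =ᵐ[μ] F := hFa.ae_eq_mk
  have hGe : (fun x => ENNReal.ofReal ‖g x‖) =ᵐ[μ] G := hGa.ae_eq_mk
  -- the core Schur estimate
  have core := schur_core hc hA hker hFm hGm
  -- identify the L² factors
  have hfint : Integrable (fun x => ‖f x‖ ^ 2) μ := by
    have := hf.integrable_norm_rpow (by norm_num) (by norm_num)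
    simpa [ENNReal.toReal_ofNat, Real.rpow_natCast] using this
  have hgint : Integrable (fun x => ‖g x‖ ^ 2) μ := by
    have := hg.integrable_norm_rpow (by norm_num) (by norm_num)
    simpa [ENNReal.toReal_ofNat, Real.rpow_natCast] using this
  have hFsq : (∫⁻ x in Set.Ioo (-1:ℝ) 1, F x ^ (2:ℝ)) =
      ENNReal.ofReal (∫ x in Set.Ioo (-1:ℝ) 1, ‖f x‖ ^ 2) := by
    rw [← hμdef]
    rw [show (∫⁻ x, F x ^ (2:ℝ) ∂μ) = ∫⁻ x, (ENNReal.ofReal ‖f x‖) ^ (2:ℝ) ∂μ from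
      lintegral_congr_ae (hFe.mono fun x hx => by
        have hx' : ENNReal.ofReal ‖f x‖ = F x := hx
        show F x ^ (2:ℝ) = (ENNReal.ofReal ‖f x‖) ^ (2:ℝ)
        rw [hx'])]
    rw [MeasureTheory.ofReal_integral_eq_lintegral_ofReal hfint
      (Filter.Eventually.of_forall fun x => by positivity)]
    refine lintegral_congr fun x => ?_
    rw [ENNReal.ofReal_rpow_of_nonneg (norm_nonneg _) (by norm_num)]
    norm_num [Real.rpow_natCast]
  have hGsq : (∫⁻ y in Set.Ioo (-1:ℝ) 1, G y ^ (2:ℝ)) =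
      ENNReal.ofReal (∫ y in Set.Ioo (-1:ℝ) 1, ‖g y‖ ^ 2) := by
    rw [← hμdef]
    rw [show (∫⁻ x, G x ^ (2:ℝ) ∂μ) = ∫⁻ x, (ENNReal.ofReal ‖g x‖) ^ (2:ℝ) ∂μ from
      lintegral_congr_ae (hGe.mono fun x hx => by
        have hx' : ENNReal.ofReal ‖g x‖ = G x := hx
        show G x ^ (2:ℝ) = (ENNReal.ofReal ‖g x‖) ^ (2:ℝ)
        rw [hx'])]
    rw [MeasureTheory.ofReal_integral_eq_lintegral_ofReal hgint
      (Filter.Eventually.of_forall fun x => by positivity)]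
    refine lintegral_congr fun x => ?_
    rw [ENNReal.ofReal_rpow_of_nonneg (norm_nonneg _) (by norm_num)]
    norm_num [Real.rpow_natCast]
  have hsf : (0:ℝ) ≤ ∫ x in Set.Ioo (-1:ℝ) 1, ‖f x‖ ^ 2 :=
    integral_nonneg fun x => by positivity
  have hsg : (0:ℝ) ≤ ∫ y in Set.Ioo (-1:ℝ) 1, ‖g y‖ ^ 2 :=
    integral_nonneg fun x => by positivity
  set RHS : ℝ := 6 * Real.log (1 / δ) *
      Real.sqrt (∫ x in Set.Ioo (-1 : ℝ) 1, ‖f x‖ ^ 2) *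
      Real.sqrt (∫ y in Set.Ioo (-1 : ℝ) 1, ‖g y‖ ^ 2) with hRHSdef
  have hRHSnn : 0 ≤ RHS := by positivity
  have coreR : (∫⁻ x in Set.Ioo (-1:ℝ) 1, ∫⁻ y in Set.Ioo (-1:ℝ) 1,
      F x * G y * ENNReal.ofReal ((Real.sqrt ((x - y) ^ 2 + (2 * δ) ^ 2))⁻¹)) ≤
      ENNReal.ofReal RHS := by
    refine core.trans (le_of_eq ?_)
    rw [hFsq, hGsq,
      ENNReal.ofReal_rpow_of_nonneg hsf (by norm_num),
      ENNReal.ofReal_rpow_of_nonneg hsg (by norm_num),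
      ← Real.sqrt_eq_rpow, ← Real.sqrt_eq_rpow,
      ← ENNReal.ofReal_mul hA.le, ← ENNReal.ofReal_mul (by positivity)]
  -- identify the ENNReal integrand with ofReal of the real integrand
  set φ : ℝ → ℝ → ℝ := fun x y => ‖f x‖ * ‖g y‖ / Real.sqrt ((x - y) ^ 2 + 4 * δ ^ 2)
    with hφdef
  have hφnn : ∀ x y, 0 ≤ φ x y := fun x y => by
    rw [hφdef]; positivity
  set L : ℝ≥0∞ := ∫⁻ x in Set.Ioo (-1:ℝ) 1, ∫⁻ y in Set.Ioo (-1:ℝ) 1,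
      ENNReal.ofReal (φ x y) with hLdef
  have hstep1 : ∀ x y, ENNReal.ofReal (φ x y) =
      ENNReal.ofReal ‖f x‖ * ENNReal.ofReal ‖g y‖ *
        ENNReal.ofReal ((Real.sqrt ((x - y) ^ 2 + (2 * δ) ^ 2))⁻¹) := by
    intro x y
    rw [hφdef]
    simp only [div_eq_mul_inv, hsq x y]
    rw [ENNReal.ofReal_mul (by positivity), ENNReal.ofReal_mul (norm_nonneg _)]
  have hLle : L ≤ ENNReal.ofReal RHS := by
    refine le_trans (le_of_eq ?_) coreR
    rw [hLdef]
    rw [show (∫⁻ x in Set.Ioo (-1:ℝ) 1, ∫⁻ y in Set.Ioo (-1:ℝ) 1,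
        ENNReal.ofReal (φ x y)) = ∫⁻ x in Set.Ioo (-1:ℝ) 1, ∫⁻ y in Set.Ioo (-1:ℝ) 1,
        ENNReal.ofReal ‖f x‖ * ENNReal.ofReal ‖g y‖ *
          ENNReal.ofReal ((Real.sqrt ((x - y) ^ 2 + (2 * δ) ^ 2))⁻¹) from
      lintegral_congr fun x => lintegral_congr fun y => hstep1 x y]
    refine lintegral_congr_ae (hFe.mono fun x hx => ?_)
    refine lintegral_congr_ae (hGe.mono fun y hy => ?_)
    have hx' : ENNReal.ofReal ‖f x‖ = F x := hx
    have hy' : ENNReal.ofReal ‖g y‖ = G y := hy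
    show ENNReal.ofReal ‖f x‖ * ENNReal.ofReal ‖g y‖ *
        ENNReal.ofReal ((Real.sqrt ((x - y) ^ 2 + (2 * δ) ^ 2))⁻¹) =
      F x * G y * ENNReal.ofReal ((Real.sqrt ((x - y) ^ 2 + (2 * δ) ^ 2))⁻¹)
    rw [hx', hy']
  have hLne : L ≠ ⊤ := ne_top_of_le_ne_top ENNReal.ofReal_ne_top hLle
  have hx_le : ∀ x, (∫ y in Set.Ioo (-1:ℝ) 1, φ x y) ≤
      (∫⁻ y in Set.Ioo (-1:ℝ) 1, ENNReal.ofReal (φ x y)).toReal := by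
    intro x
    by_cases hi : Integrable (fun y => φ x y) μ
    · rw [MeasureTheory.integral_eq_lintegral_of_nonneg_ae
        (Filter.Eventually.of_forall (hφnn x)) hi.aestronglyMeasurable]
    · rw [show (∫ y in Set.Ioo (-1:ℝ) 1, φ x y) = 0 from integral_undef hi]
      exact ENNReal.toReal_nonneg
  have main_le : (∫ x in Set.Ioo (-1:ℝ) 1, ∫ y in Set.Ioo (-1:ℝ) 1, φ x y) ≤ L.toReal := by
    by_cases hh : Integrable (fun x => ∫ y in Set.Ioo (-1:ℝ) 1, φ x y) μ
    · rw [MeasureTheory.integral_eq_lintegral_of_nonneg_ae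
        (Filter.Eventually.of_forall fun x => integral_nonneg (hφnn x))
        hh.aestronglyMeasurable]
      refine ENNReal.toReal_mono hLne ?_
      rw [hLdef]
      refine lintegral_mono fun x => ?_
      exact (ENNReal.ofReal_le_ofReal (hx_le x)).trans ENNReal.ofReal_toReal_le
    · rw [show (∫ x in Set.Ioo (-1:ℝ) 1, ∫ y in Set.Ioo (-1:ℝ) 1, φ x y) = 0 from
        integral_undef hh]
      exact ENNReal.toReal_nonneg
  show (∫ x in Set.Ioo (-1:ℝ) 1, ∫ y in Set.Ioo (-1:ℝ) 1, φ x y) ≤ RHS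
  calc (∫ x in Set.Ioo (-1:ℝ) 1, ∫ y in Set.Ioo (-1:ℝ) 1, φ x y)
      ≤ L.toReal := main_le
    _ ≤ (ENNReal.ofReal RHS).toReal := ENNReal.toReal_mono ENNReal.ofReal_ne_top hLle
    _ = RHS := ENNReal.toReal_ofReal hRHSnn
end

section
/- Let γ ∈ [0,1] and let q : ℝ → ℝ be continuous and integrable on ℝ. Define m(t) := ∫_t^∞ q(x) dx and the complex-valued functions A(t) := √γ · cosh m(t) − sinh m(t) and B(t) := i · (1 − cosh m(t) + √γ · sinh m(t)). Then A and B are differentiable on ℝ and solve the coupled system A′(t) = i q(t) B(t) + q(t), B′(t) = −i q(t) A(t) for all t ∈ ℝ, and they satisfy the boundary conditions A(t) → √γ and B(t) → 0 as t → +∞. -/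
open MeasureTheory

/-- the functions `A = √γ cosh m − sinh m` and
`B = i(1 − cosh m + √γ sinh m)`, with `m(t) = ∫_t^∞ q`, solve the coupled system
`A′ = iqB + q`, `B′ = −iqA` with boundary values `A → √γ`, `B → 0` at `+∞`. -/
theorem coupled_system_solution (γ : ℝ) (hγ : γ ∈ Set.Icc (0 : ℝ) 1)
    (q : ℝ → ℝ) (hqc : Continuous q) (hqi : Integrable q)
    (m : ℝ → ℝ) (hm : ∀ t : ℝ, m t = ∫ x in Set.Ioi t, q x)
    (A B : ℝ → ℂ)
    (hA : ∀ t : ℝ, A t =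
      (Real.sqrt γ : ℂ) * Complex.cosh ((m t : ℝ) : ℂ) - Complex.sinh ((m t : ℝ) : ℂ))
    (hB : ∀ t : ℝ, B t =
      Complex.I * (1 - Complex.cosh ((m t : ℝ) : ℂ)
        + (Real.sqrt γ : ℂ) * Complex.sinh ((m t : ℝ) : ℂ))) :
    (∀ t : ℝ, HasDerivAt A (Complex.I * (q t : ℂ) * B t + (q t : ℂ)) t) ∧
    (∀ t : ℝ, HasDerivAt B (-Complex.I * (q t : ℂ) * A t) t) ∧
    Filter.Tendsto A Filter.atTop (nhds ((Real.sqrt γ : ℝ) : ℂ)) ∧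
    Filter.Tendsto B Filter.atTop (nhds 0) := by
  -- m t = m 0 - ∫ 0..t q
  have hmeq : ∀ t : ℝ, m t = m 0 - ∫ x in (0:ℝ)..t, q x := by
    intro t
    have h1 := intervalIntegral.integral_Iic_add_Ioi (f := q) (b := t) (μ := volume)
      hqi.integrableOn hqi.integrableOn
    have h2 := intervalIntegral.integral_Iic_add_Ioi (f := q) (b := (0:ℝ)) (μ := volume)
      hqi.integrableOn hqi.integrableOn
    have h3 := intervalIntegral.integral_Iic_sub_Iic (f := q) (μ := volume)
      (a := (0:ℝ)) (b := t) hqi.integrableOn hqi.integrableOn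
    rw [hm t, hm 0]
    linarith
  -- derivative of m
  have hm' : ∀ t : ℝ, HasDerivAt m (-(q t)) t := by
    intro t
    have h : HasDerivAt (fun u => ∫ x in (0:ℝ)..u, q x) (q t) t :=
      intervalIntegral.integral_hasDerivAt_right hqi.intervalIntegrable
        (hqc.stronglyMeasurableAtFilter _ _) hqc.continuousAt
    have := (hasDerivAt_const t (m 0)).sub h
    simpa [Pi.sub_def, ← hmeq, zero_sub] using this
  -- derivative of complex lift
  have hmC : ∀ t : ℝ, HasDerivAt (fun u => ((m u : ℝ) : ℂ)) (-(q t : ℂ)) t := by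
    intro t
    simpa using (hm' t).ofReal_comp
  have hcosh : ∀ t : ℝ, HasDerivAt (fun u => Complex.cosh ((m u : ℝ) : ℂ))
      (Complex.sinh ((m t : ℝ) : ℂ) * (-(q t : ℂ))) t := by
    intro t
    exact (Complex.hasDerivAt_cosh _).comp t (hmC t)
  have hsinh : ∀ t : ℝ, HasDerivAt (fun u => Complex.sinh ((m u : ℝ) : ℂ))
      (Complex.cosh ((m t : ℝ) : ℂ) * (-(q t : ℂ))) t := by
    intro t
    exact (Complex.hasDerivAt_sinh _).comp t (hmC t)
  have hA' : ∀ t : ℝ, HasDerivAt A (Complex.I * (q t : ℂ) * B t + (q t : ℂ)) t := by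
    intro t
    have h := (((hcosh t).const_mul ((Real.sqrt γ : ℂ))).sub (hsinh t)).congr_of_eventuallyEq
      (Filter.Eventually.of_forall fun u => (hA u))
    refine h.congr_deriv ?_
    symm
    rw [hB t]
    have hI := Complex.I_mul_I
    ring_nf
    rw [Complex.I_sq]
    ring
  have hB' : ∀ t : ℝ, HasDerivAt B (-Complex.I * (q t : ℂ) * A t) t := by
    intro t
    have h := ((((hasDerivAt_const t (1:ℂ)).sub (hcosh t)).add
      ((hsinh t).const_mul ((Real.sqrt γ : ℂ)))).const_mul Complex.I).congr_of_eventuallyEq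
      (Filter.Eventually.of_forall fun u => (hB u))
    refine h.congr_deriv ?_
    symm
    rw [hA t]
    ring
  refine ⟨hA', hB', ?_, ?_⟩
  · -- m → 0 at top
    have hmt : Filter.Tendsto m Filter.atTop (nhds 0) := by
      have h1 : Filter.Tendsto (fun t => ∫ x in (0:ℝ)..t, q x) Filter.atTop
          (nhds (∫ x in Set.Ioi (0:ℝ), q x)) :=
        intervalIntegral_tendsto_integral_Ioi 0 hqi.integrableOn Filter.tendsto_id
      have h2 : Filter.Tendsto (fun t => m 0 - ∫ x in (0:ℝ)..t, q x) Filter.atTop (nhds 0) := by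
        have h2' := (tendsto_const_nhds (x := m 0)).sub h1
        rw [← hm 0, sub_self] at h2'
        exact h2'
      exact h2.congr fun t => (hmeq t).symm
    have hcont : Continuous (fun x : ℝ =>
        (Real.sqrt γ : ℂ) * Complex.cosh ((x : ℝ) : ℂ) - Complex.sinh ((x : ℝ) : ℂ)) :=
      (continuous_const.mul (Complex.continuous_cosh.comp Complex.continuous_ofReal)).sub
        (Complex.continuous_sinh.comp Complex.continuous_ofReal)
    have := (hcont.continuousAt (x := (0:ℝ))).tendsto.comp hmt
    refine Filter.Tendsto.congr (fun t => (hA t).symm) ?_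
    simpa [Function.comp_def] using this
  · have hmt : Filter.Tendsto m Filter.atTop (nhds 0) := by
      have h1 : Filter.Tendsto (fun t => ∫ x in (0:ℝ)..t, q x) Filter.atTop
          (nhds (∫ x in Set.Ioi (0:ℝ), q x)) :=
        intervalIntegral_tendsto_integral_Ioi 0 hqi.integrableOn Filter.tendsto_id
      have h2 : Filter.Tendsto (fun t => m 0 - ∫ x in (0:ℝ)..t, q x) Filter.atTop (nhds 0) := by
        have h2' := (tendsto_const_nhds (x := m 0)).sub h1
        rw [← hm 0, sub_self] at h2'
        exact h2'
      exact h2.congr fun t => (hmeq t).symm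
    have hcont : Continuous (fun x : ℝ =>
        Complex.I * (1 - Complex.cosh ((x : ℝ) : ℂ)
          + (Real.sqrt γ : ℂ) * Complex.sinh ((x : ℝ) : ℂ))) :=
      continuous_const.mul ((continuous_const.sub
        (Complex.continuous_cosh.comp Complex.continuous_ofReal)).add
        (continuous_const.mul (Complex.continuous_sinh.comp Complex.continuous_ofReal)))
    have := (hcont.continuousAt (x := (0:ℝ))).tendsto.comp hmt
    refine Filter.Tendsto.congr (fun t => (hB t).symm) ?_
    simpa [Function.comp_def] using this
end
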